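/- arXiv:1512.03877 — 2 statements merged into one kernel-verified Lean document; each statement's English description precedes it below -/
import Mathlib

section
/- Let R be a commutative ring and let M, N be finite free R-modules of ranks m and n respectively. Then there is an isomorphism of R-modules Λ^{mn}(M ⊗ N) ≅ (Λ^m M)^{⊗ n} ⊗ (Λ^n N)^{⊗ m} (top exterior power of a tensor product). In particular, for the determinant line: det(M ⊗ N) ≅ (det M)^{⊗ rk N} ⊗ (det N)^{⊗ rk M}. -/
/-!
Both sides are free of rank one. A basis of `M ⊗ N` with `mn` elements, obtained from bases
of `M` and `N`, trivialises `⋀^{mn}(M ⊗ N)`; likewise `⋀^m M ≅ R` and `⋀^n N ≅ R`, and tensor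
powers of `R` are `R`.
-/

open TensorProduct

namespace Set.powersetCard

abbrev uniqueOfCardEq {α : Type*} [Fintype α] {n : ℕ} (h : Fintype.card α = n) :
    Unique (powersetCard α n) where
  default := ofCard (s := Finset.univ) (by rw [Finset.card_univ, h])
  uniq s := Subtype.ext (Finset.eq_univ_of_card _ ((card_eq s).trans h.symm))

end Set.powersetCard

section

variable {R M L : Type*} [CommRing R] [AddCommGroup M] [Module R M] [AddCommGroup L] [Module R L]

/-- The exterior-power basis of `b` is indexed by the `n`-subsets of `ι`, of which there is
only one. -/
noncomputable def Module.Basis.topExteriorPowerEquiv {ι : Type*} [Fintype ι] [LinearOrder ι]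
    {n : ℕ} (b : Module.Basis ι R M) (h : Fintype.card ι = n) : (⋀[R]^n M) ≃ₗ[R] R :=
  letI := Set.powersetCard.uniqueOfCardEq h
  (b.exteriorPower n).equivFun.trans (LinearEquiv.funUnique _ R R)

noncomputable def LinearEquiv.tensorPowerBaseRing (e : L ≃ₗ[R] R) (n : ℕ) :
    TensorPower R n L ≃ₗ[R] R :=
  (PiTensorProduct.congr fun _ => e).trans
    (PiTensorProduct.constantBaseRingEquiv (Fin n) R).toLinearEquiv

end

/-- Determinant of a tensor product: for finite free modules `M`, `N` of ranks `m`, `n`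
over a commutative ring, `Λ^{mn}(M ⊗ N) ≅ (Λ^m M)^{⊗n} ⊗ (Λ^n N)^{⊗m}`. -/
theorem det_of_tensor_product_of_free_modules
    (R : Type*) [CommRing R]
    (M N : Type*) [AddCommGroup M] [Module R M] [AddCommGroup N] [Module R N]
    [Module.Free R M] [Module.Finite R M] [Module.Free R N] [Module.Finite R N]
    (m n : ℕ) (hm : Module.finrank R M = m) (hn : Module.finrank R N = n) :
    Nonempty ((⋀[R]^(m * n) (M ⊗[R] N)) ≃ₗ[R]
      (TensorPower R n (⋀[R]^m M)) ⊗[R] (TensorPower R m (⋀[R]^n N))) := by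
  rcases subsingleton_or_nontrivial R with _ | _
  · have := Module.subsingleton R (⋀[R]^(m * n) (M ⊗[R] N))
    have := Module.subsingleton R (TensorPower R n (⋀[R]^m M) ⊗[R] TensorPower R m (⋀[R]^n N))
    exact ⟨LinearEquiv.ofSubsingleton _ _⟩
  let bM := Module.finBasisOfFinrankEq R M hm
  let bN := Module.finBasisOfFinrankEq R N hn
  let bMN := (bM.tensorProduct bN).reindex finProdFinEquiv
  let detM := bM.topExteriorPowerEquiv (Fintype.card_fin m)
  let detN := bN.topExteriorPowerEquiv (Fintype.card_fin n)
  let detMN := bMN.topExteriorPowerEquiv (Fintype.card_fin (m * n))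
  exact ⟨detMN.trans ((TensorProduct.congr (detM.tensorPowerBaseRing n)
    (detN.tensorPowerBaseRing m)).trans (TensorProduct.lid R R)).symm⟩
end

section
/- Let X, Y be topological spaces with Y irreducible, and let f : X → Y be a continuous open surjection such that the fiber f^{-1}(y) is irreducible for every y in some dense subset of Y (e.g. all points). Then X is irreducible. -/
/-- If `f : X → Y` is a continuous open surjection onto an irreducible space `Y`, and the
fibers of `f` over a dense set of points are irreducible, then `X` is irreducible. -/
theorem irreducibleSpace_of_open_surjection_with_irreducible_fibers
    {X Y : Type*} [TopologicalSpace X] [TopologicalSpace Y]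
    [IrreducibleSpace Y] (f : X → Y) (hcont : Continuous f)
    (hopen : IsOpenMap f) (hsurj : Function.Surjective f)
    (hfib : ∃ D : Set Y, Dense D ∧ ∀ y ∈ D, IsIrreducible (f ⁻¹' {y})) :
    IrreducibleSpace X := by
  obtain ⟨D, hD, hfib⟩ := hfib
  have hXne : Nonempty X := by
    obtain ⟨y⟩ := ‹IrreducibleSpace Y›.toNonempty
    obtain ⟨x, -⟩ := hsurj y
    exact ⟨x⟩
  refine { toNonempty := hXne, toPreirreducibleSpace := ⟨fun U V hU hV hUne hVne => ?_⟩ }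
  simp only [Set.univ_inter] at hUne hVne ⊢
  -- images are nonempty open sets in the irreducible space Y
  have hW : (f '' U ∩ f '' V).Nonempty :=
    nonempty_preirreducible_inter (hopen U hU) (hopen V hV) (hUne.image f) (hVne.image f)
  -- by density, pick y ∈ D in this open set
  obtain ⟨y, hyW, hyD⟩ := hD.inter_open_nonempty _ ((hopen U hU).inter (hopen V hV)) hW
  obtain ⟨hyU, hyV⟩ := hyW
  obtain ⟨u, huU, hu⟩ := hyU
  obtain ⟨v, hvV, hv⟩ := hyV
  have hirr := hfib y hyD
  have h := hirr.2 U V hU hV ⟨u, hu, huU⟩ ⟨v, hv, hvV⟩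
  exact h.mono (Set.inter_subset_right)
end
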